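/- Let G be a connected graph with linear order on vertices and let v dominate w (N(v)\{w} ⊇ N(w)\{v}, with strict containment or v > w). Suppose T is a minimum-depth elimination tree of G in which some vertex is dominated by one of its descendants. Then there exists a minimum-depth elimination tree T' of G whose score is strictly greater than the score of T, where the score of a tree is the lexicographic minimum of (depth of u, u) over all vertices u dominated by a descendant, and (∞,∞) if no such vertex exists. -/

import Mathlib

open scoped Classical

/-- `nbhd G S` is the set `N(S)` of vertices outside `S` adjacent to some vertex of `S`. -/
def nbhd {V : Type*} (G : SimpleGraph V) (S : Set V) : Set V :=
  {u | u ∉ S ∧ ∃ s ∈ S, G.Adj u s}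

/-- `compOf G A c` is the vertex set of the connected component of `c` in `G[A]`. -/
def compOf {V : Type*} (G : SimpleGraph V) (A : Set V) (c : V) : Set V :=
  {x | ∃ (hx : x ∈ A) (hc : c ∈ A), (G.induce A).Reachable ⟨x, hx⟩ ⟨c, hc⟩}

/-- `IsElimTree G S r anc` : `anc` is the (reflexive) ancestor relation of an
elimination tree of `G[S]` with root `r`, following the recursive definition:
a one-vertex graph is its own elimination tree; otherwise the root `r` is made
the parent of the roots of elimination trees of the components of `G[S] - r`. -/
inductive IsElimTree {V : Type*} (G : SimpleGraph V) : Set V → V → (V → V → Prop) → Prop where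
  | single (v : V) : IsElimTree G {v} v (fun a b => a = v ∧ b = v)
  | node (S : Set V) (r : V) (hr : r ∈ S) (hS : S ≠ {r})
      (root : V → V) (sub : V → V → V → Prop)
      (hsub : ∀ c ∈ S \ {r}, IsElimTree G (compOf G (S \ {r}) c) (root c) (sub c))
      (hcong : ∀ c ∈ S \ {r}, ∀ c' ∈ S \ {r},
        compOf G (S \ {r}) c = compOf G (S \ {r}) c' → root c = root c' ∧ sub c = sub c')
      (anc : V → V → Prop)
      (hanc : ∀ a b, anc a b ↔ (a = r ∧ b ∈ S) ∨ ∃ c ∈ S \ {r}, sub c a b) :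
      IsElimTree G S r anc

/-- The depth (maximum number of vertices on a root-to-leaf path) of a rooted forest
on vertex set `S`, given by its reflexive ancestor relation `anc`. -/
noncomputable def ancDepth {V : Type*} (anc : V → V → Prop) (S : Set V) : ℕ :=
  sSup ((fun b => Set.ncard {a | anc a b}) '' S)

/-- A treedepth decomposition of `G`: a rooted forest on the vertex set of `G`
(given by its reflexive ancestor partial order, in which the set of ancestors of any
vertex is a chain) such that every edge of `G` joins an ancestor-descendant pair. -/
structure TDDecomp {V : Type*} (G : SimpleGraph V) where
  anc : V → V → Prop
  refl : ∀ v, anc v v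
  trans : ∀ a b c, anc a b → anc b c → anc a c
  antisymm : ∀ a b, anc a b → anc b a → a = b
  chain : ∀ a b v, anc a v → anc b v → anc a b ∨ anc b a
  covers : ∀ u v, G.Adj u v → anc u v ∨ anc v u

/-- Depth of a treedepth decomposition. -/
noncomputable def TDDecomp.depth {V : Type*} {G : SimpleGraph V} (F : TDDecomp G) : ℕ :=
  ancDepth F.anc Set.univ

/-- Treedepth of `G`: minimum depth of a treedepth decomposition of `G`. -/
noncomputable def treedepth {V : Type*} (G : SimpleGraph V) : ℕ :=
  sInf {d | ∃ F : TDDecomp G, F.depth = d}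

/-- `v` dominates `w`. -/
def Dominates {V : Type*} [LinearOrder V] (G : SimpleGraph V) (v w : V) : Prop :=
  v ≠ w ∧ ((G.neighborSet w \ {v}) ⊂ (G.neighborSet v \ {w}) ∨
    (G.neighborSet v \ {w} = G.neighborSet w \ {v} ∧ w < v))

/-- The score of an elimination tree (given by its ancestor relation `anc`):
the lexicographically least pair `(depth of u, u)` over vertices `u` dominated by
one of their descendants, and `⊤ = (∞,∞)` if no such vertex exists. -/
noncomputable def score {V : Type*} [Fintype V] [LinearOrder V] (G : SimpleGraph V)
    (anc : V → V → Prop) : WithTop (Lex (ℕ × V)) :=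
  Finset.min ((Finset.univ.filter
      (fun u => ∃ w, anc u w ∧ Dominates G w u)).image
    (fun u => toLex (Set.ncard {a | anc a u}, u)))

/-!
Let `u` realise the score of `T` and, among the descendants of `u` dominating it, let `w` be
maximal for domination (a strict order). Exchanging `u` and `w` in `T` gives a treedepth
decomposition of the same depth, because the neighbourhood of `w` contains that of `u`;
compressing it (below each vertex keep only its component after deleting its strict
ancestors) yields an elimination tree `T'` of no larger depth, hence of minimum depth.
Outside the subtree of `u`, `T'` agrees with `T`. Inside it, `w` sits at least as deep as `u`
did and is dominated by none of its descendants (they are the descendants of `u` in `T`, and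
domination is transitive), while every other vertex lies strictly below `w`. Hence every
pair `(depth, vertex)` counted in the score of `T'` exceeds the one of `u`.
-/

open SimpleGraph

section

variable {V : Type*} {G : SimpleGraph V}

section compOf

variable {A B K : Set V} {a c x y : V}

lemma compOf_subset : compOf G A c ⊆ A := fun _ hx => hx.1

lemma mem_compOf_self (hc : c ∈ A) : c ∈ compOf G A c := ⟨hc, hc, .refl _⟩

lemma reachable_induce_of_subset (hAB : A ⊆ B) (hx : x ∈ A) (hy : y ∈ A)
    (h : (G.induce A).Reachable ⟨x, hx⟩ ⟨y, hy⟩) :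
    (G.induce B).Reachable ⟨x, hAB hx⟩ ⟨y, hAB hy⟩ :=
  h.map (G.induceHomOfLE hAB).toHom

lemma compOf_eq_of_mem (hx : x ∈ compOf G A c) : compOf G A x = compOf G A c := by
  obtain ⟨hxA, hcA, hxc⟩ := hx
  ext z
  exact ⟨fun ⟨hz, _, hzx⟩ => ⟨hz, hcA, hzx.trans hxc⟩,
    fun ⟨hz, _, hzc⟩ => ⟨hz, hxA, hzc.trans hxc.symm⟩⟩

lemma mem_compOf_of_adj (hx : x ∈ compOf G A c) (hy : y ∈ A) (hxy : G.Adj x y) :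
    y ∈ compOf G A c :=
  ⟨hy, hx.2.1, (Adj.reachable hxy.symm : (G.induce A).Reachable ⟨y, hy⟩ ⟨x, hx.1⟩).trans
    hx.2.2⟩

lemma subset_compOf (hB : (G.induce B).Preconnected) (hBA : B ⊆ A) (ha : a ∈ B) :
    B ⊆ compOf G A a := fun _ hx =>
  ⟨hBA hx, hBA ha, reachable_induce_of_subset hBA hx ha (hB _ _)⟩

lemma compOf_eq_self (hA : (G.induce A).Preconnected) (hc : c ∈ A) : compOf G A c = A :=
  compOf_subset.antisymm (subset_compOf hA le_rfl hc)

lemma preconnected_induce_compOf : (G.induce (compOf G A c)).Preconnected := by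
  suffices h : ∀ x (hx : x ∈ compOf G A c),
      (G.induce (compOf G A c)).Reachable ⟨x, hx⟩ ⟨c, mem_compOf_self hx.2.1⟩ from
    fun ⟨x, hx⟩ ⟨y, hy⟩ => (h x hx).trans (h y hy).symm
  rintro x ⟨hxA, hcA, ⟨p⟩⟩
  -- every vertex on a walk from `x` to `c` in `G[A]` is itself connected to `c`
  have hp : ∀ z ∈ (p.map (Embedding.induce A).toHom).support, z ∈ compOf G A c := by
    simp only [Walk.support_map, List.mem_map]
    rintro _ ⟨z, hz, rfl⟩
    exact ⟨z.2, hcA, ⟨p.dropUntil z hz⟩⟩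
  exact ⟨(p.map (Embedding.induce A).toHom).induce _ hp⟩

lemma eq_of_adj_closed (hA : (G.induce A).Preconnected) (hBA : B ⊆ A)
    (hB : ∀ x ∈ B, ∀ y ∈ A, G.Adj x y → y ∈ B) (ha : a ∈ B) : B = A := by
  suffices h : ∀ z : A,
      Relation.ReflTransGen (G.induce A).Adj ⟨a, hBA ha⟩ z → z.1 ∈ B from
    hBA.antisymm fun z hz => h ⟨z, hz⟩ ((reachable_iff_reflTransGen _ _).1 (hA _ _))
  intro z hz
  induction hz with
  | refl => exact ha
  | tail _ hadj ih => exact hB _ ih _ (Subtype.prop _) hadj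

lemma compOf_sdiff : compOf G (A \ K) x = compOf G (compOf G A x \ K) x := by
  by_cases hx : x ∈ A \ K
  · have hsub : compOf G A x \ K ⊆ A \ K := fun z hz => ⟨compOf_subset hz.1, hz.2⟩
    refine (subset_compOf preconnected_induce_compOf ?_ (mem_compOf_self hx)).antisymm
      (subset_compOf preconnected_induce_compOf (fun z hz => hsub (compOf_subset hz))
        (mem_compOf_self ⟨mem_compOf_self hx.1, hx.2⟩))
    rintro z ⟨hz, _, hzx⟩
    exact ⟨⟨hz.1, hx.1, reachable_induce_of_subset Set.sdiff_subset _ _ hzx⟩, hz.2⟩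
  · have hx' : x ∉ compOf G A x \ K := fun h => hx ⟨compOf_subset h.1, h.2⟩
    ext z
    exact ⟨fun h => absurd h.2.1 hx, fun h => absurd h.2.1 hx'⟩

end compOf

namespace IsElimTree

variable {S : Set V} {r : V} {anc : V → V → Prop}

lemma mem (h : IsElimTree G S r anc) {a b : V} (hab : anc a b) : a ∈ S ∧ b ∈ S := by
  induction h with
  | single v => exact ⟨hab.1, hab.2⟩
  | node S r hr hS root sub hsub hcong anc hanc ih =>
    rcases (hanc a b).1 hab with ⟨rfl, hb⟩ | ⟨c, hc, habc⟩
    · exact ⟨hr, hb⟩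
    · obtain ⟨ha, hb⟩ := ih c hc habc
      exact ⟨(compOf_subset ha).1, (compOf_subset hb).1⟩

lemma refl (h : IsElimTree G S r anc) {a : V} (ha : a ∈ S) : anc a a := by
  induction h with
  | single v => exact ⟨ha, ha⟩
  | node S r hr hS root sub hsub hcong anc hanc ih =>
    by_cases har : a = r
    · exact (hanc a a).2 (.inl ⟨har, ha⟩)
    · exact (hanc a a).2
        (.inr ⟨a, ⟨ha, har⟩, ih a ⟨ha, har⟩ (mem_compOf_self ⟨ha, har⟩)⟩)

lemma root_mem (h : IsElimTree G S r anc) : r ∈ S := by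
  cases h with
  | single v => rfl
  | node S r hr => exact hr

lemma root_anc_iff (h : IsElimTree G S r anc) {b : V} : anc r b ↔ b ∈ S := by
  refine ⟨fun hb => (h.mem hb).2, fun hb => ?_⟩
  cases h with
  | single v => exact ⟨rfl, hb⟩
  | node S r hr hS root sub hsub hcong anc hanc => exact (hanc r b).2 (.inl ⟨rfl, hb⟩)

lemma eq_root_of_anc_root (h : IsElimTree G S r anc) {a : V} (ha : anc a r) : a = r := by
  cases h with
  | single v => exact ha.1
  | node S r hr hS root sub hsub hcong anc hanc =>
    rcases (hanc a r).1 ha with ⟨rfl, -⟩ | ⟨c, hc, har⟩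
    · rfl
    · exact absurd (compOf_subset ((hsub c hc).mem har).2).2 (by simp)

lemma sub_eq_of_mem_compOf {root : V → V} {sub : V → V → V → Prop}
    (hcong : ∀ c ∈ S \ {r}, ∀ c' ∈ S \ {r},
      compOf G (S \ {r}) c = compOf G (S \ {r}) c' → root c = root c' ∧ sub c = sub c')
    {c x : V} (hc : c ∈ S \ {r}) (hx : x ∈ compOf G (S \ {r}) c) : sub x = sub c :=
  (hcong x (compOf_subset hx) c hc (compOf_eq_of_mem hx)).2

lemma trans (h : IsElimTree G S r anc) {a b c : V} (hab : anc a b) (hbc : anc b c) :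
    anc a c := by
  induction h with
  | single v => exact ⟨hab.1, hbc.2⟩
  | node S r hr hS root sub hsub hcong anc hanc ih =>
    have hT := IsElimTree.node S r hr hS root sub hsub hcong anc hanc
    rcases (hanc a b).1 hab with ⟨rfl, -⟩ | ⟨d, hd, hdab⟩
    · exact hT.root_anc_iff.2 (hT.mem hbc).2
    have hb := ((hsub d hd).mem hdab).2
    rcases (hanc b c).1 hbc with ⟨rfl, -⟩ | ⟨e, he, hebc⟩
    · exact absurd (compOf_subset hb).2 (by simp)
    rw [← sub_eq_of_mem_compOf hcong he ((hsub e he).mem hebc).1,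
      sub_eq_of_mem_compOf hcong hd hb] at hebc
    exact (hanc a c).2 (.inr ⟨d, hd, ih d hd hdab hebc⟩)

lemma antisymm (h : IsElimTree G S r anc) {a b : V} (hab : anc a b) (hba : anc b a) :
    a = b := by
  induction h with
  | single v => exact hab.1.trans hba.1.symm
  | node S r hr hS root sub hsub hcong anc hanc ih =>
    have hT := IsElimTree.node S r hr hS root sub hsub hcong anc hanc
    rcases (hanc a b).1 hab with ⟨rfl, -⟩ | ⟨d, hd, hdab⟩
    · exact (hT.eq_root_of_anc_root hba).symm
    have hb := ((hsub d hd).mem hdab).2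
    rcases (hanc b a).1 hba with ⟨rfl, -⟩ | ⟨e, he, heba⟩
    · exact absurd (compOf_subset hb).2 (by simp)
    rw [← sub_eq_of_mem_compOf hcong he ((hsub e he).mem heba).2,
      sub_eq_of_mem_compOf hcong hd ((hsub d hd).mem hdab).1] at heba
    exact ih d hd hdab heba

lemma chain (h : IsElimTree G S r anc) {a b v : V} (hav : anc a v) (hbv : anc b v) :
    anc a b ∨ anc b a := by
  induction h with
  | single v => exact .inl ⟨hav.1, hbv.1⟩
  | node S r hr hS root sub hsub hcong anc hanc ih =>
    have hT := IsElimTree.node S r hr hS root sub hsub hcong anc hanc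
    rcases (hanc a v).1 hav with ⟨rfl, -⟩ | ⟨d, hd, hdav⟩
    · exact .inl (hT.root_anc_iff.2 (hT.mem hbv).1)
    rcases (hanc b v).1 hbv with ⟨rfl, -⟩ | ⟨e, he, hebv⟩
    · exact .inr (hT.root_anc_iff.2 (hT.mem hav).1)
    rw [← sub_eq_of_mem_compOf hcong he ((hsub e he).mem hebv).2,
      sub_eq_of_mem_compOf hcong hd ((hsub d hd).mem hdav).2] at hebv
    exact (ih d hd hdav hebv).imp (fun h => (hanc a b).2 (.inr ⟨d, hd, h⟩))
      (fun h => (hanc b a).2 (.inr ⟨d, hd, h⟩))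

lemma covers (h : IsElimTree G S r anc) {x y : V} (hx : x ∈ S) (hy : y ∈ S)
    (hxy : G.Adj x y) : anc x y ∨ anc y x := by
  induction h with
  | single v => exact absurd (hx.trans hy.symm) hxy.ne
  | node S r hr hS root sub hsub hcong anc hanc ih =>
    have hT := IsElimTree.node S r hr hS root sub hsub hcong anc hanc
    by_cases hxr : x = r
    · exact .inl (hxr ▸ hT.root_anc_iff.2 hy)
    by_cases hyr : y = r
    · exact .inr (hyr ▸ hT.root_anc_iff.2 hx)
    have hxC : x ∈ compOf G (S \ {r}) x := mem_compOf_self ⟨hx, hxr⟩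
    exact (ih x ⟨hx, hxr⟩ hxC (mem_compOf_of_adj hxC ⟨hy, hyr⟩ hxy)).imp
      (fun h => (hanc x y).2 (.inr ⟨x, ⟨hx, hxr⟩, h⟩))
      (fun h => (hanc y x).2 (.inr ⟨x, ⟨hx, hxr⟩, h⟩))

def toTDDecomp (h : IsElimTree G Set.univ r anc) : TDDecomp G where
  anc := anc
  refl _ := h.refl trivial
  trans _ _ _ := h.trans
  antisymm _ _ := h.antisymm
  chain _ _ _ := h.chain
  covers _ _ := h.covers trivial trivial

end IsElimTree

namespace IsElimTree

variable {S : Set V} {r : V} {anc : V → V → Prop}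

lemma compOf_sdiff_strictAnc_root (h : IsElimTree G S r anc) (hS : (G.induce S).Preconnected) :
    compOf G (S \ {a | anc a r ∧ a ≠ r}) r = {b | anc r b} := by
  have hempty : {a | anc a r ∧ a ≠ r} = ∅ :=
    Set.eq_empty_of_forall_notMem fun a ha => ha.2 (h.eq_root_of_anc_root ha.1)
  rw [hempty, Set.sdiff_empty, compOf_eq_self hS h.root_mem]
  exact Set.ext fun b => h.root_anc_iff.symm

lemma compOf_sdiff_strictAnc (h : IsElimTree G S r anc) (hS : (G.induce S).Preconnected)
    {x : V} (hx : x ∈ S) : compOf G (S \ {a | anc a x ∧ a ≠ x}) x = {b | anc x b} := by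
  induction h generalizing x with
  | single v =>
    subst hx
    exact (IsElimTree.single _).compOf_sdiff_strictAnc_root hS
  | node S r hr hS' root sub hsub hcong anc hanc ih =>
    have hT := IsElimTree.node S r hr hS' root sub hsub hcong anc hanc
    by_cases hxr : x = r
    · subst hxr
      exact hT.compOf_sdiff_strictAnc_root hS
    have hxm : x ∈ S \ {r} := ⟨hx, hxr⟩
    have hsubx : ∀ {c}, c ∈ S \ {r} → x ∈ compOf G (S \ {r}) c → sub c = sub x :=
      fun hc hxc => (sub_eq_of_mem_compOf hcong hc hxc).symm
    have hstrict : {a | anc a x ∧ a ≠ x} = insert r {a | sub x a x ∧ a ≠ x} := by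
      ext a
      simp only [Set.mem_ofPred_eq, Set.mem_insert_iff]
      constructor
      · rintro ⟨ha, hax⟩
        rcases (hanc a x).1 ha with ⟨rfl, -⟩ | ⟨c, hc, hcax⟩
        · exact .inl rfl
        · exact .inr ⟨hsubx hc ((hsub c hc).mem hcax).2 ▸ hcax, hax⟩
      · rintro (rfl | ⟨hax, hne⟩)
        · exact ⟨hT.root_anc_iff.2 hx, Ne.symm hxr⟩
        · exact ⟨(hanc a x).2 (.inr ⟨x, hxm, hax⟩), hne⟩
    have hdesc : {b | anc x b} = {b | sub x x b} := by
      ext b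
      refine ⟨fun hb => ?_, fun hb => (hanc x b).2 (.inr ⟨x, hxm, hb⟩)⟩
      rcases (hanc x b).1 hb with ⟨rfl, -⟩ | ⟨c, hc, hcxb⟩
      · exact absurd rfl hxr
      · exact hsubx hc ((hsub c hc).mem hcxb).1 ▸ hcxb
    rw [hstrict, Set.insert_eq, ← Set.sdiff_sdiff, compOf_sdiff,
      ih x hxm preconnected_induce_compOf (mem_compOf_self hxm), hdesc]

end IsElimTree

namespace TDDecomp

variable (F : TDDecomp G)

lemma ncard_anc_lt [Finite V] {a b : V} (hab : F.anc a b) (hne : a ≠ b) :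
    {c | F.anc c a}.ncard < {c | F.anc c b}.ncard :=
  Set.ncard_lt_ncard ⟨fun _ hc => F.trans _ _ _ hc hab,
    fun h => hne (F.antisymm a b hab (h (F.refl b)))⟩ (Set.toFinite _)

/-- A vertex of `S` with the fewest ancestors can have no strict ancestor in `S`, and its
descendants in `S` are closed under the edges of `G[S]`. -/
lemma exists_anc_forall_of_preconnected [Finite V] {S : Set V}
    (hS : (G.induce S).Preconnected) (hne : S.Nonempty) : ∃ m ∈ S, ∀ x ∈ S, F.anc m x := by
  obtain ⟨m, hmS, hmin⟩ := S.exists_min_image (fun m => {c | F.anc c m}.ncard) S.toFinite hne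
  have hclosed :
      ∀ x ∈ {x ∈ S | F.anc m x}, ∀ y ∈ S, G.Adj x y → y ∈ {x ∈ S | F.anc m x} := by
    rintro x ⟨-, hmx⟩ y hy hxy
    refine ⟨hy, ?_⟩
    rcases F.covers x y hxy with hxy' | hyx
    · exact F.trans _ _ _ hmx hxy'
    rcases F.chain m y x hmx hyx with hmy | hym
    · exact hmy
    by_cases hym' : y = m
    · exact hym' ▸ F.refl m
    · exact absurd (hmin y hy) (F.ncard_anc_lt hym hym').not_ge
  have hall := eq_of_adj_closed hS (fun x hx => hx.1) hclosed ⟨hmS, F.refl m⟩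
  exact ⟨m, hmS, fun x hx => (hall.ge hx).2⟩

noncomputable def minOf [Nonempty V] (S : Set V) : V :=
  Classical.epsilon fun m => m ∈ S ∧ ∀ x ∈ S, F.anc m x

def compress (S : Set V) (a b : V) : Prop :=
  a ∈ S ∧ F.anc a b ∧ b ∈ compOf G (S \ {x | F.anc x a ∧ x ≠ a}) a

theorem isElimTree_compress [Finite V] [Nonempty V] {S : Set V}
    (hS : (G.induce S).Preconnected) (hne : S.Nonempty) :
    IsElimTree G S (F.minOf S) (F.compress S) := by
  induction hn : S.ncard using Nat.strong_induction_on generalizing S with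
  | _ n ih =>
  obtain ⟨hr, hrmin⟩ : F.minOf S ∈ S ∧ ∀ x ∈ S, F.anc (F.minOf S) x :=
    Classical.epsilon_spec (F.exists_anc_forall_of_preconnected hS hne)
  set r := F.minOf S
  have hstrict_r : S \ {x | F.anc x r ∧ x ≠ r} = S :=
    sdiff_eq_left.2 (Set.disjoint_left.2 fun x hx h => h.2 (F.antisymm _ _ h.1 (hrmin x hx)))
  have hroot : ∀ b, F.compress S r b ↔ b ∈ S := fun b => by
    rw [compress, hstrict_r, compOf_eq_self hS hr]
    exact ⟨fun h => h.2.2, fun hb => ⟨hr, hrmin b hb, hb⟩⟩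
  by_cases hSr : S = {r}
  · have hsingle : F.compress S = fun a b => a = r ∧ b = r := by
      ext a b
      refine ⟨fun h => ?_, ?_⟩
      · have hab : a ∈ S ∧ b ∈ S := ⟨h.1, (compOf_subset h.2.2).1⟩
        rwa [hSr, Set.mem_singleton_iff, Set.mem_singleton_iff] at hab
      rintro ⟨rfl, rfl⟩
      exact (hroot _).2 hr
    rw [hsingle, hSr]
    exact IsElimTree.single r
  have hcomp : ∀ a ∈ S \ {r}, compOf G (S \ {x | F.anc x a ∧ x ≠ a}) a =
      compOf G (compOf G (S \ {r}) a \ {x | F.anc x a ∧ x ≠ a}) a := fun a ha => by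
    have hrK : {r} ⊆ {x | F.anc x a ∧ x ≠ a} :=
      Set.singleton_subset_iff.2 ⟨hrmin a ha.1, fun h => ha.2 h.symm⟩
    rw [← compOf_sdiff, Set.sdiff_sdiff, Set.union_eq_right.2 hrK]
  refine .node S r hr hSr (fun c => F.minOf (compOf G (S \ {r}) c))
    (fun c => F.compress (compOf G (S \ {r}) c)) (fun c hc => ?_)
    (fun c _ c' _ h => ⟨congrArg _ h, congrArg _ h⟩) _ (fun a b => ?_)
  · have hCS : compOf G (S \ {r}) c ⊆ S := compOf_subset.trans Set.sdiff_subset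
    have hlt : (compOf G (S \ {r}) c).ncard < n :=
      hn ▸ Set.ncard_lt_ncard ⟨hCS, fun h => (compOf_subset (h hr)).2 rfl⟩ (Set.toFinite S)
    exact ih _ hlt preconnected_induce_compOf ⟨c, mem_compOf_self hc⟩ rfl
  constructor
  · rintro ⟨haS, hab, hb⟩
    by_cases har : a = r
    · exact .inl ⟨har, (compOf_subset hb).1⟩
    · exact .inr
        ⟨a, ⟨haS, har⟩, mem_compOf_self ⟨haS, har⟩, hab, hcomp a ⟨haS, har⟩ ▸ hb⟩
  · rintro (⟨rfl, hb⟩ | ⟨c, hc, haC, hab, hb⟩)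
    · exact (hroot b).2 hb
    · have ha := compOf_subset haC
      rw [← compOf_eq_of_mem haC, ← hcomp a ha] at hb
      exact ⟨ha.1, hab, hb⟩

end TDDecomp

lemma neighborSet_sdiff_subset_trans {u w y : V}
    (h₁ : G.neighborSet u \ {w} ⊆ G.neighborSet w \ {u})
    (h₂ : G.neighborSet w \ {y} ⊆ G.neighborSet y \ {w}) (huw : u ≠ w) (hwy : w ≠ y)
    (huy : u ≠ y) : G.neighborSet u \ {y} ⊆ G.neighborSet y \ {u} := by
  rintro x ⟨hux, hxy⟩
  by_cases hxw : x = w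
  · subst hxw
    have hyu := h₁ ⟨(h₂ ⟨G.adj_symm hux, huy⟩).1.symm, hwy.symm⟩
    exact ⟨hyu.1.symm, huw.symm⟩
  · exact ⟨(h₂ ⟨(h₁ ⟨hux, hxw⟩).1, hxy⟩).1, fun h => G.irrefl (h ▸ hux)⟩

section Dominates

variable [LinearOrder V] {u v w y : V}

lemma Dominates.neighborSet_sdiff_subset (h : Dominates G v w) :
    G.neighborSet w \ {v} ⊆ G.neighborSet v \ {w} := by
  rcases h.2 with hss | ⟨heq, -⟩
  exacts [hss.1, heq.ge]

lemma Dominates.lt_of_eq (h : Dominates G v w)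
    (heq : G.neighborSet v \ {w} = G.neighborSet w \ {v}) : w < v := by
  rcases h.2 with hss | ⟨-, hlt⟩
  exacts [absurd heq.symm hss.ne, hlt]

lemma Dominates.not_dominates (h : Dominates G v w) : ¬ Dominates G w v := fun h' =>
  have heq := h'.neighborSet_sdiff_subset.antisymm h.neighborSet_sdiff_subset
  (h.lt_of_eq heq).not_gt (h'.lt_of_eq heq.symm)

lemma Dominates.trans (h₁ : Dominates G y w) (h₂ : Dominates G w u) : Dominates G y u := by
  have hyu : y ≠ u := fun h => h₁.not_dominates (h ▸ h₂)
  have I₁ := h₂.neighborSet_sdiff_subset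
  have I₂ := h₁.neighborSet_sdiff_subset
  have incl := neighborSet_sdiff_subset_trans I₁ I₂ h₂.1.symm h₁.1.symm hyu.symm
  refine ⟨hyu, ?_⟩
  by_cases hrev : G.neighborSet y \ {u} ⊆ G.neighborSet u \ {y}
  · -- then both steps are ties, decided by the order
    have e₁ := I₂.antisymm (neighborSet_sdiff_subset_trans hrev I₁ hyu h₂.1.symm h₁.1)
    have e₂ := I₁.antisymm (neighborSet_sdiff_subset_trans I₂ hrev h₁.1.symm hyu h₂.1)
    exact .inr ⟨hrev.antisymm incl, (h₂.lt_of_eq e₂.symm).trans (h₁.lt_of_eq e₁.symm)⟩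
  · exact .inl ⟨incl, hrev⟩

instance : IsTrans V (Dominates G) := ⟨fun _ _ _ h₁ h₂ => h₁.trans h₂⟩

instance : Std.Irrefl (Dominates G) := ⟨fun _ h => h.1 rfl⟩

lemma exists_not_dominates [Finite V] {D : Set V} (hne : D.Nonempty) :
    ∃ m ∈ D, ∀ y ∈ D, ¬ Dominates G y m :=
  (Finite.wellFounded_of_trans_of_irrefl _).has_min D hne

end Dominates

namespace TDDecomp

variable (F : TDDecomp G) {u w : V}

lemma covers_swap (huw : F.anc u w) (hN : G.neighborSet u \ {w} ⊆ G.neighborSet w \ {u})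
    {x y : V} (hxy : G.Adj x y) :
    F.anc (Equiv.swap u w x) (Equiv.swap u w y) ∨
      F.anc (Equiv.swap u w y) (Equiv.swap u w x) := by
  have hw : ∀ y, G.Adj u y → y ≠ w → F.anc w y ∨ F.anc y w := fun y huy hyw =>
    F.covers w y (hN ⟨huy, hyw⟩).1
  have hu : ∀ y, G.Adj w y → F.anc u y ∨ F.anc y u := fun y hwy =>
    (F.covers w y hwy).elim (fun h => .inl (F.trans _ _ _ huw h))
      (fun h => (F.chain y u w h huw).symm)
  have key : ∀ x y, G.Adj x y → x = u ∨ x = w →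
      F.anc (Equiv.swap u w x) (Equiv.swap u w y) ∨
        F.anc (Equiv.swap u w y) (Equiv.swap u w x) := by
    rintro x y hxy (rfl | rfl)
    · rw [Equiv.swap_apply_left]
      rcases eq_or_ne y w with rfl | hyw
      · exact .inr (by rwa [Equiv.swap_apply_right])
      · rw [Equiv.swap_apply_of_ne_of_ne hxy.ne.symm hyw]
        exact hw y hxy hyw
    · rw [Equiv.swap_apply_right]
      rcases eq_or_ne y u with rfl | hyu
      · exact .inl (by rwa [Equiv.swap_apply_left])
      · rw [Equiv.swap_apply_of_ne_of_ne hyu hxy.ne.symm]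
        exact hu y hxy
  by_cases hx : x = u ∨ x = w
  · exact key x y hxy hx
  by_cases hy : y = u ∨ y = w
  · exact (key y x hxy.symm hy).symm
  obtain ⟨hxu, hxw⟩ := not_or.1 hx
  obtain ⟨hyu, hyw⟩ := not_or.1 hy
  rw [Equiv.swap_apply_of_ne_of_ne hxu hxw, Equiv.swap_apply_of_ne_of_ne hyu hyw]
  exact F.covers x y hxy

def swap (huw : F.anc u w) (hN : G.neighborSet u \ {w} ⊆ G.neighborSet w \ {u}) :
    TDDecomp G where
  anc a b := F.anc (Equiv.swap u w a) (Equiv.swap u w b)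
  refl _ := F.refl _
  trans _ _ _ := F.trans _ _ _
  antisymm _ _ hab hba := (Equiv.swap u w).injective (F.antisymm _ _ hab hba)
  chain _ _ _ := F.chain _ _ _
  covers _ _ := F.covers_swap huw hN

variable {F} {a x : V}

lemma ne_of_not_anc (huw : F.anc u w) (hx : ¬ F.anc u x) : x ≠ u ∧ x ≠ w :=
  ⟨fun h => hx (h ▸ F.refl u), fun h => hx (h ▸ huw)⟩

lemma not_anc_of_not_anc (huw : F.anc u w) (hx : ¬ F.anc u x) : ¬ F.anc w x :=
  fun h => hx (F.trans _ _ _ huw h)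

lemma anc_iff_anc_of_not_anc (huw : F.anc u w) (hx : ¬ F.anc u x) : F.anc x u ↔ F.anc x w :=
  ⟨fun h => F.trans _ _ _ h huw, fun h => (F.chain x u w h huw).resolve_right hx⟩

lemma anc_swap_apply_iff (huw : F.anc u w) : F.anc u (Equiv.swap u w x) ↔ F.anc u x := by
  rcases eq_or_ne x u with rfl | hxu
  · simp only [Equiv.swap_apply_left, huw, F.refl]
  rcases eq_or_ne x w with rfl | hxw
  · simp only [Equiv.swap_apply_right, huw, F.refl]
  rw [Equiv.swap_apply_of_ne_of_ne hxu hxw]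

variable (huw : F.anc u w) (hN : G.neighborSet u \ {w} ⊆ G.neighborSet w \ {u})

lemma swap_anc_iff_of_not_anc_right (hx : ¬ F.anc u x) :
    (F.swap huw hN).anc a x ↔ F.anc a x := by
  obtain ⟨hxu, hxw⟩ := ne_of_not_anc huw hx
  change F.anc _ (Equiv.swap u w x) ↔ _
  rw [Equiv.swap_apply_of_ne_of_ne hxu hxw]
  rcases eq_or_ne a u with rfl | hau
  · rw [Equiv.swap_apply_left]
    exact iff_of_false (not_anc_of_not_anc huw hx) hx
  rcases eq_or_ne a w with rfl | haw
  · rw [Equiv.swap_apply_right]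
    exact iff_of_false hx (not_anc_of_not_anc huw hx)
  rw [Equiv.swap_apply_of_ne_of_ne hau haw]

lemma swap_anc_iff_of_not_anc_left (hx : ¬ F.anc u x) :
    (F.swap huw hN).anc x a ↔ F.anc x a := by
  obtain ⟨hxu, hxw⟩ := ne_of_not_anc huw hx
  change F.anc (Equiv.swap u w x) _ ↔ _
  rw [Equiv.swap_apply_of_ne_of_ne hxu hxw]
  rcases eq_or_ne a u with rfl | hau
  · rw [Equiv.swap_apply_left]
    exact (anc_iff_anc_of_not_anc huw hx).symm
  rcases eq_or_ne a w with rfl | haw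
  · rw [Equiv.swap_apply_right]
    exact anc_iff_anc_of_not_anc huw hx
  rw [Equiv.swap_apply_of_ne_of_ne hau haw]

lemma swap_anc_right_iff : (F.swap huw hN).anc w x ↔ F.anc u x := by
  change F.anc (Equiv.swap u w w) _ ↔ _
  rw [Equiv.swap_apply_right, anc_swap_apply_iff huw]

lemma swap_strictAnc_right (hwu : w ≠ u) :
    {a | (F.swap huw hN).anc a w ∧ a ≠ w} = {a | F.anc a u ∧ a ≠ u} := by
  ext a
  change F.anc (Equiv.swap u w a) (Equiv.swap u w w) ∧ a ≠ w ↔ F.anc a u ∧ a ≠ u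
  rw [Equiv.swap_apply_right]
  rcases eq_or_ne a u with rfl | hau
  · rw [Equiv.swap_apply_left]
    exact iff_of_false (fun h => hwu (F.antisymm _ _ h.1 huw)) (fun h => h.2 rfl)
  rcases eq_or_ne a w with rfl | haw
  · exact iff_of_false (fun h => h.2 rfl) (fun h => hwu (F.antisymm _ _ h.1 huw))
  rw [Equiv.swap_apply_of_ne_of_ne hau haw]
  exact ⟨fun h => ⟨h.1, hau⟩, fun h => ⟨h.1, haw⟩⟩

end TDDecomp

lemma ancDepth_univ_le [Finite V] {anc' anc : V → V → Prop}
    (h : ∀ x, ∃ y, {a | anc' a x}.ncard ≤ {a | anc a y}.ncard) :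
    ancDepth anc' Set.univ ≤ ancDepth anc Set.univ := by
  refine csSup_le' ?_
  rintro _ ⟨x, -, rfl⟩
  obtain ⟨y, hy⟩ := h x
  exact hy.trans (le_csSup (Set.toFinite _).bddAbove ⟨y, trivial, rfl⟩)

namespace IsElimTree

variable {r : V} {anc : V → V → Prop}

lemma treedepth_le_ancDepth (hT : IsElimTree G Set.univ r anc) :
    treedepth G ≤ ancDepth anc Set.univ :=
  Nat.sInf_le ⟨hT.toTDDecomp, rfl⟩

lemma compress_iff_of_strictAnc_eq (hT : IsElimTree G Set.univ r anc)
    (hG : (G.induce Set.univ).Preconnected) (F : TDDecomp G) {x y b : V} (hyx : anc y x)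
    (hK : {a | F.anc a x ∧ a ≠ x} = {a | anc a y ∧ a ≠ y}) :
    F.compress Set.univ x b ↔ F.anc x b ∧ anc y b := by
  have hcone := hT.compOf_sdiff_strictAnc hG (Set.mem_univ y)
  have hx : x ∈ compOf G (Set.univ \ {a | anc a y ∧ a ≠ y}) y := hcone ▸ hyx
  simp only [TDDecomp.compress, hK, compOf_eq_of_mem hx, hcone, Set.mem_univ, true_and,
    Set.mem_ofPred_eq]

variable (hT : IsElimTree G Set.univ r anc) {u w : V} (huw : anc u w)
  (hN : G.neighborSet u \ {w} ⊆ G.neighborSet w \ {u})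

def swapTree : V → V → Prop := (hT.toTDDecomp.swap huw hN).compress Set.univ

lemma isElimTree_swapTree [Finite V] [Nonempty V] (hG : (G.induce Set.univ).Preconnected) :
    IsElimTree G Set.univ ((hT.toTDDecomp.swap huw hN).minOf Set.univ) (hT.swapTree huw hN) :=
  TDDecomp.isElimTree_compress _ hG Set.univ_nonempty

lemma ancDepth_swapTree_le [Finite V] :
    ancDepth (hT.swapTree huw hN) Set.univ ≤ ancDepth anc Set.univ :=
  ancDepth_univ_le fun x => ⟨Equiv.swap u w x, Set.ncard_le_ncard_of_injOn (Equiv.swap u w)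
    (fun _ ha => ha.2.1) (Equiv.swap u w).injective.injOn (Set.toFinite _)⟩

variable {x b : V}

lemma swapTree_iff_of_not_anc (hG : (G.induce Set.univ).Preconnected) (hx : ¬ anc u x) :
    hT.swapTree huw hN x b ↔ anc x b := by
  rw [swapTree, hT.compress_iff_of_strictAnc_eq hG _ (hT.refl trivial)]
  · exact and_iff_right_of_imp fun hxb =>
      (TDDecomp.swap_anc_iff_of_not_anc_left (F := hT.toTDDecomp) huw hN hx).2 hxb
  · ext a
    exact and_congr_left fun _ =>
      TDDecomp.swap_anc_iff_of_not_anc_right (F := hT.toTDDecomp) huw hN hx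

lemma swapTree_iff_of_not_anc_right (hG : (G.induce Set.univ).Preconnected) (hx : ¬ anc u x) :
    hT.swapTree huw hN b x ↔ anc b x := by
  have hb : anc b x → ¬ anc u b := fun hbx hub => hx (hT.trans hub hbx)
  refine ⟨fun h => ?_, fun h => (hT.swapTree_iff_of_not_anc huw hN hG (hb h)).2 h⟩
  exact (TDDecomp.swap_anc_iff_of_not_anc_right (F := hT.toTDDecomp) huw hN hx).1 h.2.1

lemma swapTree_right_of_anc (hG : (G.induce Set.univ).Preconnected) (hwu : w ≠ u)
    (hx : anc u x) : hT.swapTree huw hN w x := by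
  rw [swapTree, hT.compress_iff_of_strictAnc_eq hG _ huw
    (TDDecomp.swap_strictAnc_right (F := hT.toTDDecomp) huw hN hwu)]
  exact ⟨(TDDecomp.swap_anc_right_iff (F := hT.toTDDecomp) huw hN).2 hx, hx⟩

-- `Equiv.swap u w` maps the ancestors of `u` in `T` to ancestors of `w` in the new tree.
lemma ncard_anc_le_swapTree [Finite V] (hG : (G.induce Set.univ).Preconnected) (hwu : w ≠ u) :
    {a | anc a u}.ncard ≤ {a | hT.swapTree huw hN a w}.ncard := by
  have : Nonempty V := ⟨u⟩
  refine Set.ncard_le_ncard_of_injOn (Equiv.swap u w) (fun a hau => ?_)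
    (Equiv.swap u w).injective.injOn (Set.toFinite _)
  rcases eq_or_ne a u with rfl | hau'
  · rw [Set.mem_ofPred_eq, Equiv.swap_apply_left]
    exact (hT.isElimTree_swapTree huw hN hG).refl trivial
  have hua : ¬ anc u a := fun h => hau' (hT.antisymm hau h)
  have haw : a ≠ w := fun h => hwu (hT.antisymm (h ▸ hau) huw)
  rw [Set.mem_ofPred_eq, Equiv.swap_apply_of_ne_of_ne hau' haw]
  exact (hT.swapTree_iff_of_not_anc huw hN hG hua).2 (hT.trans hau huw)

end IsElimTree

section Score

variable [Fintype V] [LinearOrder V] {anc : V → V → Prop}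

lemma score_le {x y : V} (hxy : anc x y) (hyx : Dominates G y x) :
    score G anc ≤ toLex ({a | anc a x}.ncard, x) :=
  Finset.min_le (Finset.mem_image_of_mem (fun u => toLex ({a | anc a u}.ncard, u))
    (Finset.mem_filter.2 ⟨Finset.mem_univ x, y, hxy, hyx⟩))

lemma lt_score {p : Lex (ℕ × V)}
    (h : ∀ x y, anc x y → Dominates G y x → p < toLex ({a | anc a x}.ncard, x)) :
    (p : WithTop (Lex (ℕ × V))) < score G anc :=
  (Finset.lt_inf_iff (WithTop.coe_lt_top p)).2 fun q hq => by
    obtain ⟨x, hx, rfl⟩ := Finset.mem_image.1 hq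
    obtain ⟨-, y, hxy, hyx⟩ := Finset.mem_filter.1 hx
    exact WithTop.coe_lt_coe.2 (h x y hxy hyx)

lemma exists_score_eq (h : ∃ x y, anc x y ∧ Dominates G y x) :
    ∃ x, (∃ y, anc x y ∧ Dominates G y x) ∧
      score G anc = toLex ({a | anc a x}.ncard, x) := by
  obtain ⟨x, y, hxy, hyx⟩ := h
  obtain ⟨p, hp⟩ := WithTop.ne_top_iff_exists.1
    (ne_top_of_le_ne_top WithTop.coe_ne_top (score_le hxy hyx))
  obtain ⟨x, hx, rfl⟩ := Finset.mem_image.1 (Finset.mem_of_min hp.symm)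
  exact ⟨x, (Finset.mem_filter.1 hx).2, hp.symm⟩

end Score

namespace IsElimTree

variable [Fintype V] [LinearOrder V] {r : V} {anc : V → V → Prop}
  (hT : IsElimTree G Set.univ r anc) {u w : V} (huw : anc u w)

theorem lt_swapTree_of_dominates (hG : (G.induce Set.univ).Preconnected)
    (hwu : Dominates G w u) (hwmax : ∀ y, anc u y → Dominates G y u → ¬ Dominates G y w)
    (hscore : score G anc = toLex ({a | anc a u}.ncard, u)) {x y : V}
    (hxy : hT.swapTree huw hwu.neighborSet_sdiff_subset x y) (hyx : Dominates G y x) :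
    toLex ({a | anc a u}.ncard, u) <
      toLex ({a | hT.swapTree huw hwu.neighborSet_sdiff_subset a x}.ncard, x) := by
  have : Nonempty V := ⟨u⟩
  set hN := hwu.neighborSet_sdiff_subset
  by_cases hux : anc u x
  · have hxw : x ≠ w := by
      rintro rfl
      have huy := (TDDecomp.swap_anc_right_iff (F := hT.toTDDecomp) huw hN).1 hxy.2.1
      exact hwmax y huy (hyx.trans hwu) hyx
    have hdepth := (hT.isElimTree_swapTree huw hN hG).toTDDecomp.ncard_anc_lt
      (hT.swapTree_right_of_anc huw hN hG hwu.1 hux) hxw.symm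
    exact Prod.Lex.toLex_lt_toLex.2
      (.inl ((hT.ncard_anc_le_swapTree huw hN hG hwu.1).trans_lt hdepth))
  · have hxy' : anc x y := (hT.swapTree_iff_of_not_anc huw hN hG hux).1 hxy
    have hle := WithTop.coe_le_coe.1 (hscore ▸ score_le hxy' hyx)
    have hanc : {a | hT.swapTree huw hN a x} = {a | anc a x} :=
      Set.ext fun a => hT.swapTree_iff_of_not_anc_right huw hN hG hux
    rw [hanc]
    refine hle.lt_of_ne fun h => hux ?_
    rw [show u = x from congrArg (fun p => (ofLex p).2) h]
    exact hT.refl trivial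

end IsElimTree

end

/-- If `T` is a minimum-depth elimination tree of connected `G` in which
some vertex is dominated by one of its descendants, then there exists a minimum-depth
elimination tree of `G` of strictly greater score. -/
theorem exists_elimTree_score_gt {V : Type*} [Fintype V] [LinearOrder V]
    {G : SimpleGraph V} (hG : G.Connected) {r : V} {anc : V → V → Prop}
    (hT : IsElimTree G Set.univ r anc) (hmin : ancDepth anc Set.univ = treedepth G)
    (hdom : ∃ u w, anc u w ∧ Dominates G w u) :
    ∃ (r' : V) (anc' : V → V → Prop),
      IsElimTree G Set.univ r' anc' ∧ ancDepth anc' Set.univ = treedepth G ∧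
      score G anc < score G anc' := by
  have : Nonempty V := hG.nonempty
  have hGu : (G.induce Set.univ).Preconnected := G.induceUnivIso.preconnected_iff.2 hG.preconnected
  obtain ⟨u, ⟨w₀, huw₀, hw₀u⟩, hscore⟩ := exists_score_eq hdom
  obtain ⟨w, ⟨huw, hwu⟩, hwmax⟩ :=
    exists_not_dominates (D := {y | anc u y ∧ Dominates G y u}) ⟨w₀, huw₀, hw₀u⟩
  have hT' := hT.isElimTree_swapTree huw hwu.neighborSet_sdiff_subset hGu
  refine ⟨_, _, hT', ?_, ?_⟩
  · exact (hmin ▸ hT.ancDepth_swapTree_le huw _).antisymm hT'.treedepth_le_ancDepth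
  rw [hscore]
  exact lt_score fun x y hxy hyx =>
    hT.lt_swapTree_of_dominates huw hGu hwu (fun y hy hyu => hwmax y ⟨hy, hyu⟩) hscore
      hxy hyx
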